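/- Let Φ be a reduced crystallographic root system of type D₄ in a 4-dimensional real inner product space, with base (simple system) e₁, e₂, e₃, e₄ whose Cartan matrix has C_{ii} = 2, C_{1j} = C_{j1} = −1 for j = 2,3,4, and C_{ij} = 0 for distinct i,j ∈ {2,3,4} (so e₁ is the trivalent node). Let W₀ be the subgroup of the orthogonal group generated by the reflections s_{e₂}, s_{e₃}, s_{e₄} in the hyperplanes orthogonal to e₂, e₃, e₄. If v = Σᵢ αᵢ eᵢ and v′ = Σᵢ αᵢ′ eᵢ are roots of Φ with α₁ ≠ 0, then v′ lies in the W₀-orbit of v if and only if α₁′ = α₁. -/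

import Mathlib

open scoped BigOperators
open RealInnerProductSpace

/-- A reduced crystallographic root system `Φ` in a real inner product space. -/
structure IsReducedCrystallographicRootSystem
    {V : Type*} [NormedAddCommGroup V] [InnerProductSpace ℝ V] (Φ : Set V) : Prop where
  finite : Φ.Finite
  span_top : Submodule.span ℝ Φ = ⊤
  ne_zero : ∀ v ∈ Φ, v ≠ 0
  reduced : ∀ v ∈ Φ, ∀ t : ℝ, t • v ∈ Φ → t = 1 ∨ t = -1
  reflect_mem : ∀ v ∈ Φ, ∀ w ∈ Φ, w - (2 * ⟪v, w⟫ / ⟪v, v⟫) • v ∈ Φ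
  crystallographic : ∀ v ∈ Φ, ∀ w ∈ Φ, ∃ z : ℤ, 2 * ⟪v, w⟫ / ⟪v, v⟫ = (z : ℝ)

/-- `e` is a base (simple system) for the root system `Φ`: each `e i` is a root, the `e i`
are linearly independent, and every root is an integer combination of the `e i` with all
coefficients of the same sign. -/
structure IsBase {V : Type*} [NormedAddCommGroup V] [InnerProductSpace ℝ V]
    (Φ : Set V) {n : ℕ} (e : Fin n → V) : Prop where
  mem : ∀ i, e i ∈ Φ
  indep : LinearIndependent ℝ e
  coords : ∀ v ∈ Φ, ∃ α : Fin n → ℤ,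
    v = ∑ i, (α i : ℝ) • e i ∧ ((∀ i, 0 ≤ α i) ∨ (∀ i, α i ≤ 0))

/-- The Cartan matrix of type `D₄`, with `e₁` (index `0`) the trivalent node. -/
def cartanD4 : Fin 4 → Fin 4 → ℝ := fun i j =>
  if i = j then 2 else if i = 0 ∨ j = 0 then -1 else 0

section aux

set_option linter.unusedSectionVars false
set_option maxRecDepth 8000

variable {V : Type*} [NormedAddCommGroup V] [InnerProductSpace ℝ V]
variable {Φ : Set V} {e : Fin 4 → V}
variable (hΦ : IsReducedCrystallographicRootSystem Φ) (hbase : IsBase Φ e)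
variable (hC : ∀ i j, 2 * ⟪e i, e j⟫ / ⟪e j, e j⟫ = cartanD4 i j)

lemma unique4 (hind : LinearIndependent ℝ e) (b0 b1 b2 b3 g0 g1 g2 g3 : ℝ)
    (h : b0 • e 0 + b1 • e 1 + b2 • e 2 + b3 • e 3
       = g0 • e 0 + g1 • e 1 + g2 • e 2 + g3 • e 3) :
    b0 = g0 ∧ b1 = g1 ∧ b2 = g2 ∧ b3 = g3 := by
  rw [Fintype.linearIndependent_iff] at hind
  have key := hind (![b0,b1,b2,b3] - ![g0,g1,g2,g3]) (by
    rw [Fin.sum_univ_four]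
    simp only [Pi.sub_apply, Matrix.cons_val_zero, Matrix.cons_val_one, Matrix.head_cons,
      Matrix.cons_val_two, Matrix.tail_cons, Matrix.cons_val_three]
    rw [← sub_eq_zero] at h
    rw [← h]
    module)
  have k0 := key 0; have k1 := key 1; have k2 := key 2; have k3 := key 3
  simp only [Pi.sub_apply, Matrix.cons_val_zero, Matrix.cons_val_one, Matrix.head_cons,
    Matrix.cons_val_two, Matrix.tail_cons, Matrix.cons_val_three, sub_eq_zero] at k0 k1 k2 k3
  exact ⟨k0, k1, k2, k3⟩


variable {c : ℝ}
variable (hie : ∀ i j, ⟪e i, e j⟫ = c / 2 * cartanD4 i j) (hc : 0 < c)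

include hΦ hbase hC in
lemma enn (j : Fin 4) : ⟪e j, e j⟫ ≠ 0 := by
  have := hΦ.ne_zero (e j) (hbase.mem j)
  simpa [real_inner_self_eq_norm_sq] using pow_ne_zero 2 (norm_ne_zero_iff.mpr this)

include hΦ hbase hC in
lemma c_pos : (0:ℝ) < ⟪e 0, e 0⟫ := by
  have h := hΦ.ne_zero (e 0) (hbase.mem 0)
  rw [real_inner_self_eq_norm_sq]
  exact pow_pos (norm_pos_iff.mpr h) 2

include hΦ hbase hC in
lemma same_norm (j : Fin 4) : ⟪e j, e j⟫ = ⟪e 0, e 0⟫ := by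
  by_cases hj : j = 0
  · rw [hj]
  · have h1 := hC 0 j
    have h2 := hC j 0
    have hj' : (0 : Fin 4) ≠ j := fun h => hj h.symm
    rw [div_eq_iff (enn hΦ hbase hC j)] at h1
    rw [div_eq_iff (enn hΦ hbase hC 0)] at h2
    simp only [cartanD4, if_neg hj', if_neg hj, eq_self_iff_true, true_or, or_true,
      if_true] at h1 h2
    rw [real_inner_comm] at h2
    linarith

include hΦ hbase hC in
lemma inner_e (i j : Fin 4) : ⟪e i, e j⟫ = ⟪e 0, e 0⟫ / 2 * cartanD4 i j := by
  have h1 := hC i j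
  rw [div_eq_iff (enn hΦ hbase hC j), same_norm hΦ hbase hC j] at h1
  linarith

include hie in
lemma inner4 (β0 β1 β2 β3 : ℝ) (j : Fin 4) :
    ⟪e j, β0 • e 0 + β1 • e 1 + β2 • e 2 + β3 • e 3⟫ =
      c / 2 * (β0 * cartanD4 j 0 + β1 * cartanD4 j 1 + β2 * cartanD4 j 2 + β3 * cartanD4 j 3) := by
  simp only [inner_add_right, real_inner_smul_right, hie]
  ring

include hie in
lemma norm4 (β0 β1 β2 β3 : ℝ) :
    ⟪β0 • e 0 + β1 • e 1 + β2 • e 2 + β3 • e 3, β0 • e 0 + β1 • e 1 + β2 • e 2 + β3 • e 3⟫ =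
      c * (β0^2 + β1^2 + β2^2 + β3^2 - β0 * (β1 + β2 + β3)) := by
  simp only [inner_add_left, real_inner_smul_left, inner4 hie]
  simp (config := { decide := true }) only [cartanD4, Fin.ext_iff]
  norm_num
  ring

include hie in
lemma ejj (j : Fin 4) : ⟪e j, e j⟫ = c := by
  rw [hie]
  simp [cartanD4]

include hie hc in
lemma coeff4 (β0 β1 β2 β3 : ℝ) (j : Fin 4) :
    2 * ⟪e j, β0 • e 0 + β1 • e 1 + β2 • e 2 + β3 • e 3⟫ / ⟪e j, e j⟫ =
      β0 * cartanD4 j 0 + β1 * cartanD4 j 1 + β2 * cartanD4 j 2 + β3 * cartanD4 j 3 := by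
  rw [inner4 hie, ejj hie]
  field_simp

include hbase in
lemma sign4 (b0 b1 b2 b3 : ℤ)
    (h : ((b0:ℝ) • e 0 + (b1:ℝ) • e 1 + (b2:ℝ) • e 2 + (b3:ℝ) • e 3) ∈ Φ) :
    (0 ≤ b0 ∧ 0 ≤ b1 ∧ 0 ≤ b2 ∧ 0 ≤ b3) ∨ (b0 ≤ 0 ∧ b1 ≤ 0 ∧ b2 ≤ 0 ∧ b3 ≤ 0) := by
  obtain ⟨γ, hγ, hsign⟩ := hbase.coords _ h
  rw [Fin.sum_univ_four] at hγ
  obtain ⟨u0, u1, u2, u3⟩ := unique4 hbase.indep _ _ _ _ _ _ _ _ hγ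
  have e0 : b0 = γ 0 := by exact_mod_cast u0
  have e1 : b1 = γ 1 := by exact_mod_cast u1
  have e2 : b2 = γ 2 := by exact_mod_cast u2
  have e3 : b3 = γ 3 := by exact_mod_cast u3
  rcases hsign with hs | hs
  · exact Or.inl ⟨e0 ▸ hs 0, e1 ▸ hs 1, e2 ▸ hs 2, e3 ▸ hs 3⟩
  · exact Or.inr ⟨e0 ▸ hs 0, e1 ▸ hs 1, e2 ▸ hs 2, e3 ▸ hs 3⟩

include hΦ hbase hie hc in
lemma step0 (b0 b1 b2 b3 : ℤ)
    (h : ((b0:ℝ) • e 0 + (b1:ℝ) • e 1 + (b2:ℝ) • e 2 + (b3:ℝ) • e 3) ∈ Φ) :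
    (((b1+b2+b3-b0 : ℤ):ℝ) • e 0 + (b1:ℝ) • e 1 + (b2:ℝ) • e 2 + (b3:ℝ) • e 3) ∈ Φ := by
  have key := hΦ.reflect_mem (e 0) (hbase.mem 0) _ h
  rw [coeff4 hie hc] at key
  have hval : ((b0:ℝ) * cartanD4 0 0 + (b1:ℝ) * cartanD4 0 1 + (b2:ℝ) * cartanD4 0 2 +
      (b3:ℝ) * cartanD4 0 3) = 2*(b0:ℝ) - b1 - b2 - b3 := by
    simp (config := { decide := true }) only [cartanD4, Fin.ext_iff]
    norm_num
    try ring
  rw [hval] at key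
  have heq : ((b0:ℝ) • e 0 + (b1:ℝ) • e 1 + (b2:ℝ) • e 2 + (b3:ℝ) • e 3)
      - (2*(b0:ℝ) - b1 - b2 - b3) • e 0
      = (((b1+b2+b3-b0 : ℤ):ℝ) • e 0 + (b1:ℝ) • e 1 + (b2:ℝ) • e 2 + (b3:ℝ) • e 3) := by
    push_cast
    module
  rwa [heq] at key

include hΦ hbase hie hc in
lemma step1 (b0 b1 b2 b3 : ℤ)
    (h : ((b0:ℝ) • e 0 + (b1:ℝ) • e 1 + (b2:ℝ) • e 2 + (b3:ℝ) • e 3) ∈ Φ) :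
    ((b0:ℝ) • e 0 + ((b0-b1 : ℤ):ℝ) • e 1 + (b2:ℝ) • e 2 + (b3:ℝ) • e 3) ∈ Φ := by
  have key := hΦ.reflect_mem (e 1) (hbase.mem 1) _ h
  rw [coeff4 hie hc] at key
  have hval : ((b0:ℝ) * cartanD4 1 0 + (b1:ℝ) * cartanD4 1 1 + (b2:ℝ) * cartanD4 1 2 +
      (b3:ℝ) * cartanD4 1 3) = 2*(b1:ℝ) - b0 := by
    simp (config := { decide := true }) only [cartanD4, Fin.ext_iff]
    norm_num
    try ring
  rw [hval] at key
  have heq : ((b0:ℝ) • e 0 + (b1:ℝ) • e 1 + (b2:ℝ) • e 2 + (b3:ℝ) • e 3)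
      - (2*(b1:ℝ) - b0) • e 1
      = ((b0:ℝ) • e 0 + ((b0-b1 : ℤ):ℝ) • e 1 + (b2:ℝ) • e 2 + (b3:ℝ) • e 3) := by
    push_cast
    module
  rwa [heq] at key

include hΦ hbase hie hc in
lemma step2 (b0 b1 b2 b3 : ℤ)
    (h : ((b0:ℝ) • e 0 + (b1:ℝ) • e 1 + (b2:ℝ) • e 2 + (b3:ℝ) • e 3) ∈ Φ) :
    ((b0:ℝ) • e 0 + (b1:ℝ) • e 1 + ((b0-b2 : ℤ):ℝ) • e 2 + (b3:ℝ) • e 3) ∈ Φ := by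
  have key := hΦ.reflect_mem (e 2) (hbase.mem 2) _ h
  rw [coeff4 hie hc] at key
  have hval : ((b0:ℝ) * cartanD4 2 0 + (b1:ℝ) * cartanD4 2 1 + (b2:ℝ) * cartanD4 2 2 +
      (b3:ℝ) * cartanD4 2 3) = 2*(b2:ℝ) - b0 := by
    simp (config := { decide := true }) only [cartanD4, Fin.ext_iff]
    norm_num
    try ring
  rw [hval] at key
  have heq : ((b0:ℝ) • e 0 + (b1:ℝ) • e 1 + (b2:ℝ) • e 2 + (b3:ℝ) • e 3)
      - (2*(b2:ℝ) - b0) • e 2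
      = ((b0:ℝ) • e 0 + (b1:ℝ) • e 1 + ((b0-b2 : ℤ):ℝ) • e 2 + (b3:ℝ) • e 3) := by
    push_cast
    module
  rwa [heq] at key

include hΦ hbase hie hc in
lemma step3 (b0 b1 b2 b3 : ℤ)
    (h : ((b0:ℝ) • e 0 + (b1:ℝ) • e 1 + (b2:ℝ) • e 2 + (b3:ℝ) • e 3) ∈ Φ) :
    ((b0:ℝ) • e 0 + (b1:ℝ) • e 1 + (b2:ℝ) • e 2 + ((b0-b3 : ℤ):ℝ) • e 3) ∈ Φ := by
  have key := hΦ.reflect_mem (e 3) (hbase.mem 3) _ h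
  rw [coeff4 hie hc] at key
  have hval : ((b0:ℝ) * cartanD4 3 0 + (b1:ℝ) * cartanD4 3 1 + (b2:ℝ) * cartanD4 3 2 +
      (b3:ℝ) * cartanD4 3 3) = 2*(b3:ℝ) - b0 := by
    simp (config := { decide := true }) only [cartanD4, Fin.ext_iff]
    norm_num
    try ring
  rw [hval] at key
  have heq : ((b0:ℝ) • e 0 + (b1:ℝ) • e 1 + (b2:ℝ) • e 2 + (b3:ℝ) • e 3)
      - (2*(b3:ℝ) - b0) • e 3
      = ((b0:ℝ) • e 0 + (b1:ℝ) • e 1 + (b2:ℝ) • e 2 + ((b0-b3 : ℤ):ℝ) • e 3) := by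
    push_cast
    module
  rwa [heq] at key

lemma arithT1 (b0 b1 b2 b3 : ℤ) (h0 : 0 < b0)
    (hid : 4 = b0*b0 + (2*b1-b0)*(2*b1-b0) + (2*b2-b0)*(2*b2-b0) + (2*b3-b0)*(2*b3-b0))
    (hb1 : (2*b1-b0)*(2*b1-b0) < 4) (hb2 : (2*b2-b0)*(2*b2-b0) < 4)
    (hb3 : (2*b3-b0)*(2*b3-b0) < 4)
    (hne : ¬(2*b1-b0 = 0 ∧ 2*b2-b0 = 0 ∧ 2*b3-b0 = 0)) :
    b0 = 1 ∧ (b1=0∨b1=1) ∧ (b2=0∨b2=1) ∧ (b3=0∨b3=1) := by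
  have e0 : b0 ≤ 2 := by nlinarith
  have e1 : b1 ≤ 1 := by nlinarith
  have e1' : 0 ≤ b1 := by nlinarith
  have e2 : b2 ≤ 1 := by nlinarith
  have e2' : 0 ≤ b2 := by nlinarith
  have e3 : b3 ≤ 1 := by nlinarith
  have e3' : 0 ≤ b3 := by nlinarith
  interval_cases b0 <;> interval_cases b1 <;> interval_cases b2 <;> interval_cases b3 <;> omega

lemma arithT2 (b0 b1 b2 b3 : ℤ) (h0 : 0 < b0)
    (hid : 8 = b0*b0 + (2*b1-b0)*(2*b1-b0) + (2*b2-b0)*(2*b2-b0) + (2*b3-b0)*(2*b3-b0))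
    (hd1 : 2 ∣ 2*b1-b0) (hb1 : (2*b1-b0)*(2*b1-b0) < 8)
    (hd2 : 2 ∣ 2*b2-b0) (hb2 : (2*b2-b0)*(2*b2-b0) < 8)
    (hd3 : 2 ∣ 2*b3-b0) (hb3 : (2*b3-b0)*(2*b3-b0) < 8) :
    b0 = 2 ∧ (((b1=0∨b1=2)∧b2=1∧b3=1) ∨ ((b2=0∨b2=2)∧b1=1∧b3=1) ∨ ((b3=0∨b3=2)∧b1=1∧b2=1)) := by
  have e0 : b0 ≤ 2 := by nlinarith
  have e1 : b1 ≤ 2 := by nlinarith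
  have e1' : -1 ≤ b1 := by nlinarith
  have e2 : b2 ≤ 2 := by nlinarith
  have e2' : -1 ≤ b2 := by nlinarith
  have e3 : b3 ≤ 2 := by nlinarith
  have e3' : -1 ≤ b3 := by nlinarith
  interval_cases b0 <;> interval_cases b1 <;> interval_cases b2 <;> interval_cases b3 <;> omega

lemma arithT3 (b0 b1 b2 b3 : ℤ) (h0 : 0 < b0)
    (hid : 12 = b0*b0 + (2*b1-b0)*(2*b1-b0) + (2*b2-b0)*(2*b2-b0) + (2*b3-b0)*(2*b3-b0))
    (hd1 : 3 ∣ 2*b1-b0) (hb1 : (2*b1-b0)*(2*b1-b0) < 12)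
    (hd2 : 3 ∣ 2*b2-b0) (hb2 : (2*b2-b0)*(2*b2-b0) < 12)
    (hd3 : 3 ∣ 2*b3-b0) (hb3 : (2*b3-b0)*(2*b3-b0) < 12) : False := by
  have e0 : b0 ≤ 3 := by nlinarith
  have e1 : b1 ≤ 3 := by nlinarith
  have e1' : -1 ≤ b1 := by nlinarith
  have e2 : b2 ≤ 3 := by nlinarith
  have e2' : -1 ≤ b2 := by nlinarith
  have e3 : b3 ≤ 3 := by nlinarith
  have e3' : -1 ≤ b3 := by nlinarith
  interval_cases b0 <;> interval_cases b1 <;> interval_cases b2 <;> interval_cases b3 <;> omega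

include hΦ hbase hie hc in
lemma dvdT (b0 b1 b2 b3 : ℤ)
    (h : ((b0:ℝ) • e 0 + (b1:ℝ) • e 1 + (b2:ℝ) • e 2 + (b3:ℝ) • e 3) ∈ Φ) (j : Fin 4) (n : ℤ)
    (hn : (n:ℝ) = (b0:ℝ) * cartanD4 j 0 + (b1:ℝ) * cartanD4 j 1 + (b2:ℝ) * cartanD4 j 2 +
      (b3:ℝ) * cartanD4 j 3) :
    (b0^2+b1^2+b2^2+b3^2-b0*(b1+b2+b3)) ∣ n := by
  obtain ⟨z, hz⟩ := hΦ.crystallographic _ h (e j) (hbase.mem j)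
  set v := (b0:ℝ) • e 0 + (b1:ℝ) • e 1 + (b2:ℝ) • e 2 + (b3:ℝ) • e 3 with hv
  have hvv : ⟪v, v⟫ = c * ((b0^2+b1^2+b2^2+b3^2-b0*(b1+b2+b3) : ℤ) : ℝ) := by
    rw [hv, norm4 hie]; push_cast; ring
  have hie2 : ⟪v, e j⟫ = c / 2 * (n:ℝ) := by
    rw [real_inner_comm, hv, inner4 hie, hn]
  have hT0 : ((b0^2+b1^2+b2^2+b3^2-b0*(b1+b2+b3) : ℤ) : ℝ) ≠ 0 := by
    intro h0
    have : ⟪v, v⟫ = 0 := by rw [hvv, h0, mul_zero]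
    exact hΦ.ne_zero _ h (inner_self_eq_zero.mp this)
  rw [hie2, hvv] at hz
  have h3 : 2 * (c / 2 * (n:ℝ)) = c * n := by ring
  rw [h3, mul_div_mul_left _ _ hc.ne'] at hz
  have hz' : (n:ℝ) = (z:ℝ) * ((b0^2+b1^2+b2^2+b3^2-b0*(b1+b2+b3) : ℤ) : ℝ) := by
    rw [← hz, div_mul_cancel₀ _ hT0]
  have hz'' : (n:ℝ) = (((b0^2+b1^2+b2^2+b3^2-b0*(b1+b2+b3)) * z : ℤ) : ℝ) := by
    push_cast at hz' ⊢
    linear_combination hz'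
  exact ⟨z, by exact_mod_cast hz''⟩

include hbase hie hc in
lemma posdef (g0 g1 g2 g3 : ℤ) (hne : ¬(g0 = 0 ∧ g1 = 0 ∧ g2 = 0 ∧ g3 = 0)) :
    0 < g0^2+g1^2+g2^2+g3^2-g0*(g1+g2+g3) := by
  set u := (g0:ℝ) • e 0 + (g1:ℝ) • e 1 + (g2:ℝ) • e 2 + (g3:ℝ) • e 3 with hu
  have hune : u ≠ 0 := by
    intro h0
    have h1 : u = (0:ℝ) • e 0 + (0:ℝ) • e 1 + (0:ℝ) • e 2 + (0:ℝ) • e 3 := by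
      rw [h0]; module
    obtain ⟨u0, u1, u2, u3⟩ := unique4 hbase.indep _ _ _ _ _ _ _ _ (hu ▸ h1)
    exact hne ⟨by exact_mod_cast u0, by exact_mod_cast u1, by exact_mod_cast u2,
      by exact_mod_cast u3⟩
  have hpos : (0:ℝ) < ⟪u, u⟫ := by
    rw [real_inner_self_eq_norm_sq]
    exact pow_pos (norm_pos_iff.mpr hune) 2
  have hQ : ⟪u, u⟫ = c * ((g0^2+g1^2+g2^2+g3^2-g0*(g1+g2+g3) : ℤ) : ℝ) := by
    rw [hu, norm4 hie]; push_cast; ring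
  rw [hQ] at hpos
  have : (0:ℝ) < ((g0^2+g1^2+g2^2+g3^2-g0*(g1+g2+g3) : ℤ) : ℝ) := by nlinarith
  exact_mod_cast this

include hΦ hbase hie hc in
lemma classify_pos (b0 b1 b2 b3 : ℤ) (hb0 : 0 < b0)
    (h : ((b0:ℝ) • e 0 + (b1:ℝ) • e 1 + (b2:ℝ) • e 2 + (b3:ℝ) • e 3) ∈ Φ) :
    (b0 = 1 ∧ (b1 = 0 ∨ b1 = 1) ∧ (b2 = 0 ∨ b2 = 1) ∧ (b3 = 0 ∨ b3 = 1)) ∨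
      (b0 = 2 ∧ b1 = 1 ∧ b2 = 1 ∧ b3 = 1) := by
  have hd0 : (b0^2+b1^2+b2^2+b3^2-b0*(b1+b2+b3)) ∣ (2*b0-b1-b2-b3) := by
    refine dvdT hΦ hbase hie hc b0 b1 b2 b3 h 0 _ ?_
    simp (config := { decide := true }) only [cartanD4, Fin.ext_iff]
    push_cast; norm_num; try ring
  have hd1 : (b0^2+b1^2+b2^2+b3^2-b0*(b1+b2+b3)) ∣ (2*b1-b0) := by
    refine dvdT hΦ hbase hie hc b0 b1 b2 b3 h 1 _ ?_
    simp (config := { decide := true }) only [cartanD4, Fin.ext_iff]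
    push_cast; norm_num; try ring
  have hd2 : (b0^2+b1^2+b2^2+b3^2-b0*(b1+b2+b3)) ∣ (2*b2-b0) := by
    refine dvdT hΦ hbase hie hc b0 b1 b2 b3 h 2 _ ?_
    simp (config := { decide := true }) only [cartanD4, Fin.ext_iff]
    push_cast; norm_num; try ring
  have hd3 : (b0^2+b1^2+b2^2+b3^2-b0*(b1+b2+b3)) ∣ (2*b3-b0) := by
    refine dvdT hΦ hbase hie hc b0 b1 b2 b3 h 3 _ ?_
    simp (config := { decide := true }) only [cartanD4, Fin.ext_iff]
    push_cast; norm_num; try ring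
  have hTpos : 0 < b0^2+b1^2+b2^2+b3^2-b0*(b1+b2+b3) :=
    posdef hbase hie hc b0 b1 b2 b3 (by omega)
  have hq1 : 0 < (2*b0)^2+b0^2+(2*b2)^2+(2*b3)^2-(2*b0)*(b0+2*b2+2*b3) :=
    posdef hbase hie hc (2*b0) b0 (2*b2) (2*b3) (by omega)
  have hq2 : 0 < (2*b0)^2+(2*b1)^2+b0^2+(2*b3)^2-(2*b0)*(2*b1+b0+2*b3) :=
    posdef hbase hie hc (2*b0) (2*b1) b0 (2*b3) (by omega)
  have hq3 : 0 < (2*b0)^2+(2*b1)^2+(2*b2)^2+b0^2-(2*b0)*(2*b1+2*b2+b0) :=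
    posdef hbase hie hc (2*b0) (2*b1) (2*b2) b0 (by omega)
  have hbd1 : (2*b1-b0)*(2*b1-b0) < 4*(b0^2+b1^2+b2^2+b3^2-b0*(b1+b2+b3)) := by nlinarith
  have hbd2 : (2*b2-b0)*(2*b2-b0) < 4*(b0^2+b1^2+b2^2+b3^2-b0*(b1+b2+b3)) := by nlinarith
  have hbd3 : (2*b3-b0)*(2*b3-b0) < 4*(b0^2+b1^2+b2^2+b3^2-b0*(b1+b2+b3)) := by nlinarith
  by_cases hall : 2*b1-b0 = 0 ∧ 2*b2-b0 = 0 ∧ 2*b3-b0 = 0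
  · -- all pairings with the legs vanish: the highest root case
    right
    obtain ⟨hA, hB, hCq⟩ : b2 = b1 ∧ b3 = b1 ∧ b0 = 2*b1 := by omega
    obtain ⟨k, hk⟩ := hd0
    rw [hA, hB, hCq] at hk
    have hb1pos : 0 < b1 := by omega
    have hk' : b1 * 1 = b1 * (b1 * k) := by linear_combination hk
    have hone : 1 = b1 * k := mul_left_cancel₀ (by omega) hk'
    have : b1 = 1 := by
      have h1 : b1 ∣ 1 := Dvd.intro k hone.symm
      have := Int.le_of_dvd one_pos h1
      omega
    omega
  · obtain ⟨T, hT⟩ : ∃ T, T = b0^2+b1^2+b2^2+b3^2-b0*(b1+b2+b3) := ⟨_, rfl⟩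
    rw [← hT] at hd0 hd1 hd2 hd3 hTpos hbd1 hbd2 hbd3
    have hid : 4*T = b0*b0 + (2*b1-b0)*(2*b1-b0) + (2*b2-b0)*(2*b2-b0) +
        (2*b3-b0)*(2*b3-b0) := by rw [hT]; ring
    have hT4 : T < 4 := by
      have key : ∃ n : ℤ, T ∣ n ∧ n ≠ 0 ∧ n*n < 4*T := by
        rcases not_and_or.mp hall with h' | h'
        · exact ⟨2*b1-b0, hd1, h', hbd1⟩
        rcases not_and_or.mp h' with h'' | h''
        · exact ⟨2*b2-b0, hd2, h'', hbd2⟩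
        · exact ⟨2*b3-b0, hd3, h'', hbd3⟩
      obtain ⟨n, hdn, hn0, hnb⟩ := key
      have habs : T ≤ |n| := Int.le_of_dvd (abs_pos.mpr hn0) ((dvd_abs T n).mpr hdn)
      have habs2 : |n| * |n| = n * n := abs_mul_abs_self n
      nlinarith
    have hT1 : 1 ≤ T := hTpos
    interval_cases T
    · -- T = 1
      left
      exact arithT1 b0 b1 b2 b3 hb0 (by linarith) (by linarith) (by linarith) (by linarith) hall
    · -- T = 2 : leads to a contradiction via a chain of reflections
      exfalso
      obtain ⟨hB0, hconf⟩ := arithT2 b0 b1 b2 b3 hb0 (by linarith) hd1 (by linarith) hd2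
        (by linarith) hd3 (by linarith)
      subst hB0
      rcases hconf with ⟨hx, hB2, hB3⟩ | ⟨hx, hB1, hB3⟩ | ⟨hx, hB1, hB2⟩
      · subst hB2; subst hB3
        have h1 : (((2:ℤ):ℝ)) • e 0 + (((0:ℤ)):ℝ) • e 1 + ((1:ℤ):ℝ) • e 2 + ((1:ℤ):ℝ) • e 3 ∈ Φ := by
          rcases hx with rfl | rfl
          · exact_mod_cast h
          · have := step1 hΦ hbase hie hc 2 2 1 1 h
            norm_num at this ⊢
            exact this
        have h2 := step0 hΦ hbase hie hc 2 0 1 1 h1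
        have h3 := step2 hΦ hbase hie hc (0+1+1-2) 0 1 1 h2
        have := sign4 hbase _ _ _ _ h3
        omega
      · subst hB1; subst hB3
        have h1 : (((2:ℤ):ℝ)) • e 0 + ((1:ℤ):ℝ) • e 1 + (((0:ℤ)):ℝ) • e 2 + ((1:ℤ):ℝ) • e 3 ∈ Φ := by
          rcases hx with rfl | rfl
          · exact_mod_cast h
          · have := step2 hΦ hbase hie hc 2 1 2 1 h
            norm_num at this ⊢
            exact this
        have h2 := step0 hΦ hbase hie hc 2 1 0 1 h1
        have h3 := step1 hΦ hbase hie hc (1+0+1-2) 1 0 1 h2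
        have := sign4 hbase _ _ _ _ h3
        omega
      · subst hB1; subst hB2
        have h1 : (((2:ℤ):ℝ)) • e 0 + ((1:ℤ):ℝ) • e 1 + ((1:ℤ):ℝ) • e 2 + (((0:ℤ)):ℝ) • e 3 ∈ Φ := by
          rcases hx with rfl | rfl
          · exact_mod_cast h
          · have := step3 hΦ hbase hie hc 2 1 1 2 h
            norm_num at this ⊢
            exact this
        have h2 := step0 hΦ hbase hie hc 2 1 1 0 h1
        have h3 := step1 hΦ hbase hie hc (1+1+0-2) 1 1 0 h2
        have := sign4 hbase _ _ _ _ h3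
        omega
    · -- T = 3 : impossible
      exact (arithT3 b0 b1 b2 b3 hb0 (by linarith) hd1 (by linarith) hd2
        (by linarith) hd3 (by linarith)).elim

include hΦ hbase hie hc in
lemma classify (b0 b1 b2 b3 : ℤ) (hb0 : b0 ≠ 0)
    (h : ((b0:ℝ) • e 0 + (b1:ℝ) • e 1 + (b2:ℝ) • e 2 + (b3:ℝ) • e 3) ∈ Φ) :
    ((b0 = 1 ∨ b0 = -1) ∧ (b1 = 0 ∨ b1 = b0) ∧ (b2 = 0 ∨ b2 = b0) ∧ (b3 = 0 ∨ b3 = b0)) ∨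
      (2*b1 = b0 ∧ 2*b2 = b0 ∧ 2*b3 = b0) := by
  rcases hb0.lt_or_gt with hneg | hpos
  · set v := (b0:ℝ) • e 0 + (b1:ℝ) • e 1 + (b2:ℝ) • e 2 + (b3:ℝ) • e 3 with hv
    have key := hΦ.reflect_mem v h v h
    have hvv : ⟪v, v⟫ ≠ 0 := inner_self_ne_zero.mpr (hΦ.ne_zero _ h)
    have h2 : 2 * ⟪v, v⟫ / ⟪v, v⟫ = 2 := by field_simp
    rw [h2] at key
    have heq : v - (2:ℝ) • v = (((-b0 : ℤ)):ℝ) • e 0 + ((-b1 : ℤ):ℝ) • e 1 +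
        ((-b2 : ℤ):ℝ) • e 2 + ((-b3 : ℤ):ℝ) • e 3 := by
      rw [hv]; push_cast; module
    rw [heq] at key
    have := classify_pos hΦ hbase hie hc (-b0) (-b1) (-b2) (-b3) (by omega) key
    omega
  · have := classify_pos hΦ hbase hie hc b0 b1 b2 b3 hpos h
    omega

include hie hc in
lemma refl4 [FiniteDimensional ℝ V] (j : Fin 4) (γ : Fin 4 → ℝ) :
    (Submodule.reflection ((Submodule.span ℝ {e j})ᗮ)) (∑ i, γ i • e i) =
      (∑ i, γ i • e i) - (γ 0 * cartanD4 j 0 + γ 1 * cartanD4 j 1 + γ 2 * cartanD4 j 2 +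
        γ 3 * cartanD4 j 3) • e j := by
  rw [Submodule.reflection_apply, Submodule.starProjection_orthogonal_val]
  have hproj : ((Submodule.span ℝ {e j}).starProjection (∑ i, γ i • e i) : V) =
      ((γ 0 * cartanD4 j 0 + γ 1 * cartanD4 j 1 + γ 2 * cartanD4 j 2 + γ 3 * cartanD4 j 3) / 2)
        • e j := by
    rw [Submodule.starProjection_singleton]
    have hn : ((‖e j‖ : ℝ)^2 : ℝ) = c := by
      rw [← real_inner_self_eq_norm_sq, ejj hie]
    rw [hn]
    have hinner : ⟪e j, ∑ i, γ i • e i⟫ =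
        c / 2 * (γ 0 * cartanD4 j 0 + γ 1 * cartanD4 j 1 + γ 2 * cartanD4 j 2 +
          γ 3 * cartanD4 j 3) := by
      rw [Fin.sum_univ_four, inner4 hie]
    rw [hinner]
    congr 1
    field_simp
    simp only [RCLike.ofReal_real_eq_id, id]
    ring
  rw [hproj]
  module

end aux

lemma cart_row (j : Fin 4) (hj : j ≠ 0) (γ : Fin 4 → ℝ) :
    γ 0 * cartanD4 j 0 + γ 1 * cartanD4 j 1 + γ 2 * cartanD4 j 2 + γ 3 * cartanD4 j 3
      = 2 * γ j - γ 0 := by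
  fin_cases j
  · exact absurd rfl hj
  all_goals
    simp (config := { decide := true }) only [cartanD4, Fin.ext_iff]
  all_goals norm_num
  all_goals try ring
  all_goals rfl

lemma sum_update {V : Type*} [NormedAddCommGroup V] [InnerProductSpace ℝ V] (e : Fin 4 → V)
    (δ : Fin 4 → ℝ) (j : Fin 4) (x : ℝ) :
    ∑ i, Function.update δ j x i • e i = (∑ i, δ i • e i) + (x - δ j) • e j := by
  have h : ∀ i : Fin 4, Function.update δ j x i • e i
      = δ i • e i + (if i = j then (x - δ j) • e j else 0) := by
    intro i
    by_cases hij : i = j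
    · subst hij
      rw [Function.update_self, if_pos rfl, sub_smul]
      abel
    · rw [Function.update_of_ne hij, if_neg hij, add_zero]
  simp_rw [h]
  rw [Finset.sum_add_distrib, Finset.sum_ite_eq' Finset.univ j (fun _ => (x - δ j) • e j)]
  simp

set_option maxHeartbeats 1000000 in
/-- Lemma 2.4 (D₄ case): for roots `v = ∑ αᵢ eᵢ` with `α₁ ≠ 0`, the coefficient `α₁` is a
complete invariant of the orbits of the subgroup `W₀` generated by the reflections in the
hyperplanes orthogonal to `e₂, e₃, e₄`. -/
theorem statement3
    {V : Type*} [NormedAddCommGroup V] [InnerProductSpace ℝ V] [FiniteDimensional ℝ V]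
    (hdim : Module.finrank ℝ V = 4)
    (Φ : Set V) (hΦ : IsReducedCrystallographicRootSystem Φ)
    (e : Fin 4 → V) (hbase : IsBase Φ e)
    (hC : ∀ i j, 2 * ⟪e i, e j⟫ / ⟪e j, e j⟫ = cartanD4 i j)
    (W₀ : Subgroup (V ≃ₗᵢ[ℝ] V))
    (hW₀ : W₀ = Subgroup.closure
      {w | ∃ j : Fin 4, j ≠ 0 ∧ w = Submodule.reflection ((Submodule.span ℝ {e j})ᗮ)})
    (α α' : Fin 4 → ℤ)
    (hv : (∑ i, (α i : ℝ) • e i) ∈ Φ) (hv' : (∑ i, (α' i : ℝ) • e i) ∈ Φ)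
    (hα : α 0 ≠ 0) :
    (∃ w ∈ W₀, w (∑ i, (α i : ℝ) • e i) = ∑ i, (α' i : ℝ) • e i) ↔ α' 0 = α 0 := by
  have hie : ∀ i j, ⟪e i, e j⟫ = ⟪e 0, e 0⟫ / 2 * cartanD4 i j := inner_e hΦ hbase hC
  have hc : (0:ℝ) < ⟪e 0, e 0⟫ := c_pos hΦ hbase hC
  have hcard : Fintype.card (Fin 4) = Module.finrank ℝ V := by simp [hdim]
  let b : Module.Basis (Fin 4) ℝ V := basisOfLinearIndependentOfCardEqFinrank hbase.indep hcard
  have hbe : ⇑b = e := coe_basisOfLinearIndependentOfCardEqFinrank _ _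
  set f := b.coord 0 with hfdef
  have hf : ∀ i : Fin 4, f (e i) = if i = 0 then 1 else 0 := by
    intro i
    rw [hfdef, ← hbe, Module.Basis.coord_apply, Module.Basis.repr_self, Finsupp.single_apply]
  have fval : ∀ γ : Fin 4 → ℝ, f (∑ i, γ i • e i) = γ 0 := by
    intro γ
    rw [Fin.sum_univ_four, map_add, map_add, map_add, map_smul, map_smul, map_smul, map_smul,
      hf 0, hf 1, hf 2, hf 3]
    simp (config := { decide := true })
  constructor
  · rintro ⟨w, hw, hwv⟩
    have hfw : ∀ u ∈ W₀, ∀ x : V, f (u x) = f x := by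
      intro u hu
      rw [hW₀] at hu
      refine Subgroup.closure_induction ?_ ?_ ?_ ?_ hu
      · rintro g ⟨j, hj, rfl⟩ x
        have hx : x = ∑ i, b.repr x i • e i := by
          conv_lhs => rw [← b.sum_repr x]
          rw [hbe]
        rw [hx, refl4 hie hc j _, map_sub, fval, map_smul, smul_eq_mul, hf j, if_neg hj]
        ring
      · intro x
        rfl
      · intro u₁ u₂ _ _ p1 p2 x
        have : (u₁ * u₂) x = u₁ (u₂ x) := rfl
        rw [this, p1, p2]
      · intro u _ pu x
        have h1 : u (u⁻¹ x) = x := u.apply_symm_apply x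
        have := pu (u⁻¹ x)
        rw [h1] at this
        exact this.symm
    have h0 : f (∑ i, (α' i : ℝ) • e i) = f (∑ i, (α i : ℝ) • e i) := by
      rw [← hwv, hfw w hw]
    rw [fval, fval] at h0
    exact_mod_cast h0
  · intro hA0
    have hv4 := hv
    have hv'4 := hv'
    rw [Fin.sum_univ_four] at hv4 hv'4
    have hcl := classify hΦ hbase hie hc (α 0) (α 1) (α 2) (α 3) hα hv4
    have hcl' := classify hΦ hbase hie hc (α' 0) (α' 1) (α' 2) (α' 3) (by omega) hv'4
    have hr1 : α' 1 = α 1 ∨ α' 1 = α 0 - α 1 := by omega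
    have hr2 : α' 2 = α 2 ∨ α' 2 = α 0 - α 2 := by omega
    have hr3 : α' 3 = α 3 ∨ α' 3 = α 0 - α 3 := by omega
    set d : Fin 4 → (V ≃ₗᵢ[ℝ] V) := fun j =>
      if α' j = α j then 1 else Submodule.reflection ((Submodule.span ℝ {e j})ᗮ) with hd
    have hdW : ∀ j, j ≠ 0 → d j ∈ W₀ := by
      intro j hj
      simp only [hd]
      by_cases hh : α' j = α j
      · rw [if_pos hh]
        exact W₀.one_mem
      · rw [if_neg hh, hW₀]
        exact Subgroup.subset_closure ⟨j, hj, rfl⟩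
    have hact : ∀ j : Fin 4, j ≠ 0 → (α' j = α j ∨ α' j = α 0 - α j) →
        ∀ δ : Fin 4 → ℝ, δ 0 = (α 0 : ℝ) → δ j = (α j : ℝ) →
        d j (∑ i, δ i • e i) = ∑ i, Function.update δ j ((α' j : ℝ)) i • e i := by
      intro j hj hrj δ hδ0 hδj
      simp only [hd]
      by_cases hh : α' j = α j
      · rw [if_pos hh]
        have : ((α' j : ℤ) : ℝ) = δ j := by rw [hδj]; exact_mod_cast hh
        rw [this, Function.update_eq_self]
        rfl
      · rw [if_neg hh]
        have hαj : ((α' j : ℤ) : ℝ) = δ 0 - δ j := by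
          rw [hδ0, hδj]
          have : α' j = α 0 - α j := by
            rcases hrj with h' | h'
            · exact absurd h' hh
            · exact h'
          push_cast [this]
          ring
        rw [show (Submodule.reflection ((Submodule.span ℝ {e j})ᗮ) : V ≃ₗᵢ[ℝ] V) (∑ i, δ i • e i)
            = (∑ i, δ i • e i) - (δ 0 * cartanD4 j 0 + δ 1 * cartanD4 j 1 + δ 2 * cartanD4 j 2 +
              δ 3 * cartanD4 j 3) • e j from refl4 hie hc j δ,
          cart_row j hj δ, sum_update e δ j _, hαj]
        have hco : (δ 0 - δ j - δ j) = -(2 * δ j - δ 0) := by ring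
        rw [hco]
        module
    set β : Fin 4 → ℝ := fun i => (α i : ℝ) with hβ
    set δ3 : Fin 4 → ℝ := Function.update β 3 ((α' 3 : ℝ)) with hδ3
    set δ2 : Fin 4 → ℝ := Function.update δ3 2 ((α' 2 : ℝ)) with hδ2
    set δ1 : Fin 4 → ℝ := Function.update δ2 1 ((α' 1 : ℝ)) with hδ1
    have s3 : d 3 (∑ i, β i • e i) = ∑ i, δ3 i • e i :=
      hact 3 (by decide) hr3 β rfl rfl
    have s2 : d 2 (∑ i, δ3 i • e i) = ∑ i, δ2 i • e i := by
      refine hact 2 (by decide) hr2 δ3 ?_ ?_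
      · rw [hδ3, Function.update_of_ne (by decide)]
      · rw [hδ3, Function.update_of_ne (by decide)]
    have s1 : d 1 (∑ i, δ2 i • e i) = ∑ i, δ1 i • e i := by
      refine hact 1 (by decide) hr1 δ2 ?_ ?_
      · rw [hδ2, Function.update_of_ne (by decide), hδ3, Function.update_of_ne (by decide)]
      · rw [hδ2, Function.update_of_ne (by decide), hδ3, Function.update_of_ne (by decide)]
    have a0 : δ1 0 = ((α' 0 : ℤ) : ℝ) := by
      rw [hδ1, Function.update_of_ne (by decide), hδ2, Function.update_of_ne (by decide),
        hδ3, Function.update_of_ne (by decide), hβ]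
      show ((α 0 : ℤ) : ℝ) = ((α' 0 : ℤ) : ℝ)
      exact_mod_cast hA0.symm
    have a1 : δ1 1 = ((α' 1 : ℤ) : ℝ) := by rw [hδ1, Function.update_self]
    have a2 : δ1 2 = ((α' 2 : ℤ) : ℝ) := by
      rw [hδ1, Function.update_of_ne (by decide), hδ2, Function.update_self]
    have a3 : δ1 3 = ((α' 3 : ℤ) : ℝ) := by
      rw [hδ1, Function.update_of_ne (by decide), hδ2, Function.update_of_ne (by decide),
        hδ3, Function.update_self]
    have hfinal : ∑ i, δ1 i • e i = ∑ i, (α' i : ℝ) • e i := by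
      rw [Fin.sum_univ_four, Fin.sum_univ_four, a0, a1, a2, a3]
    refine ⟨d 1 * (d 2 * d 3), mul_mem (hdW 1 (by decide))
      (mul_mem (hdW 2 (by decide)) (hdW 3 (by decide))), ?_⟩
    have happ : (d 1 * (d 2 * d 3)) (∑ i, (α i : ℝ) • e i)
        = d 1 (d 2 (d 3 (∑ i, β i • e i))) := rfl
    rw [happ, s3, s2, s1, hfinal]
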